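/- For any Q ∈ ℝ^n, probability vectors π, π' in the simplex Δ_n, and step size α > 0: ⟨Q, π − π'⟩ − (1/α)·KL(π' ‖ π) ≤ (α/2)·‖Q‖_∞², where KL denotes the Kullback–Leibler divergence. -/

import Mathlib

/-!
Hölder's inequality bounds `⟨Q, π - π'⟩` by `M t`, where `M = ‖Q‖_∞` and `t = ‖π - π'‖₁`;
Pinsker's inequality bounds `KL(π' ‖ π)` below by `t² / 2`; and `M t - t² / (2α) ≤ α M² / 2`
by completing the square.

Pinsker's inequality is obtained by summing the pointwise bound
`3 (x - y)² / (2x + 4y) ≤ x log (x / y) - x + y` and applying the Engel form of Cauchy–Schwarz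
with weights `(2π' + 4π) / 3`, whose total mass is `2`. After the substitution `t = x / y` the
pointwise bound says that `klFun t - 3 (t - 1)² / (2t + 4)` is minimal at `t = 1`, which holds
because this function is convex on `[0, ∞)` with a critical point at `1`.
-/

section Pinsker

open Real InformationTheory

lemma hasDerivAt_klFun_sub_sq_div {t : ℝ} (ht : 0 < t) :
    HasDerivAt (fun t => klFun t - 3 * (t - 1) ^ 2 / (2 * t + 4))
      (log t - 6 * (t - 1) * (t + 5) / (2 * t + 4) ^ 2) t := by
  have hden : 2 * t + 4 ≠ 0 := by positivity
  have hlin : HasDerivAt (fun t : ℝ => 2 * t + 4) 2 t := by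
    simpa using ((hasDerivAt_id t).const_mul 2).add_const 4
  have hnum : HasDerivAt (fun t : ℝ => 3 * (t - 1) ^ 2) (6 * (t - 1)) t :=
    (((hasDerivAt_id t).sub_const 1).pow 2).const_mul 3 |>.congr_deriv (by norm_num; ring)
  refine ((hasDerivAt_klFun ht.ne').sub (hnum.div hlin hden)).congr_deriv ?_
  field_simp
  ring

lemma hasDerivAt_log_sub_mul_div_sq {t : ℝ} (ht : 0 < t) :
    HasDerivAt (fun t => log t - 6 * (t - 1) * (t + 5) / (2 * t + 4) ^ 2)
      (t⁻¹ - 216 / (2 * t + 4) ^ 3) t := by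
  have hden : 2 * t + 4 ≠ 0 := by positivity
  have hlin : HasDerivAt (fun t : ℝ => 2 * t + 4) 2 t := by
    simpa using ((hasDerivAt_id t).const_mul 2).add_const 4
  have hsq : HasDerivAt (fun t : ℝ => (2 * t + 4) ^ 2) (4 * (2 * t + 4)) t :=
    (hlin.pow 2).congr_deriv (by norm_num; ring)
  have hnum : HasDerivAt (fun t : ℝ => 6 * (t - 1) * (t + 5)) (6 * (t + 5) + 6 * (t - 1)) t :=
    (((hasDerivAt_id t).sub_const 1).const_mul (6 : ℝ)).mul ((hasDerivAt_id t).add_const 5)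
      |>.congr_deriv (by simp)
  refine ((hasDerivAt_log ht.ne').sub (hnum.div hsq (pow_ne_zero 2 hden))).congr_deriv ?_
  field_simp
  ring

lemma convexOn_klFun_sub_sq_div :
    ConvexOn ℝ (Set.Ici 0) (fun t => klFun t - 3 * (t - 1) ^ 2 / (2 * t + 4)) := by
  refine convexOn_of_hasDerivWithinAt2_nonneg (convex_Ici 0)
    (f' := fun t => log t - 6 * (t - 1) * (t + 5) / (2 * t + 4) ^ 2)
    (f'' := fun t => t⁻¹ - 216 / (2 * t + 4) ^ 3) ?_ (fun t ht => ?_) (fun t ht => ?_)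
    (fun t ht => ?_)
  · refine continuous_klFun.continuousOn.sub (ContinuousOn.div (by fun_prop) (by fun_prop) ?_)
    intro t (ht : 0 ≤ t)
    positivity
  all_goals simp only [interior_Ici, Set.mem_Ioi] at ht ⊢
  · exact (hasDerivAt_klFun_sub_sq_div ht).hasDerivWithinAt
  · exact (hasDerivAt_log_sub_mul_div_sq ht).hasDerivWithinAt
  · -- `(t + 2)³ ≥ 27 t` is AM–GM for `t, 1, 1`
    rw [sub_nonneg, div_le_iff₀ (by positivity), ← div_eq_inv_mul, le_div_iff₀ ht]
    nlinarith [sq_nonneg (t - 1), ht.le]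

lemma sq_div_le_klFun {t : ℝ} (ht : 0 ≤ t) :
    3 * (t - 1) ^ 2 / (2 * t + 4) ≤ klFun t := by
  have hmin := convexOn_klFun_sub_sq_div.isMinOn_of_rightDeriv_eq_zero
    (x := 1) (by simp) ?_ (Set.mem_Ici.mpr ht)
  · simpa [klFun_one] using hmin
  · have := (hasDerivAt_klFun_sub_sq_div one_pos).hasDerivWithinAt (s := Set.Ioi 1)
    rw [this.derivWithin (uniqueDiffWithinAt_Ioi 1)]
    simp

lemma sq_div_le_mul_log_div {x y : ℝ} (hx : 0 ≤ x) (hy : 0 < y) :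
    3 * (x - y) ^ 2 / (2 * x + 4 * y) ≤ x * log (x / y) - x + y := by
  have hy' := hy.ne'
  calc 3 * (x - y) ^ 2 / (2 * x + 4 * y) = y * (3 * (x / y - 1) ^ 2 / (2 * (x / y) + 4)) := by
        field_simp
    _ ≤ y * klFun (x / y) := by gcongr; exact sq_div_le_klFun (by positivity)
    _ = x * log (x / y) - x + y := by
        rw [klFun_apply]
        field_simp
        ring

/-- **Pinsker's inequality** -/
theorem sq_sum_abs_sub_div_two_le_sum_mul_log_div {ι : Type*} [Fintype ι] {p q : ι → ℝ}
    (hp : ∀ i, 0 ≤ p i) (hq : ∀ i, 0 < q i) (hp_sum : ∑ i, p i = 1) (hq_sum : ∑ i, q i = 1) :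
    (∑ i, |q i - p i|) ^ 2 / 2 ≤ ∑ i, p i * log (p i / q i) := by
  have hw : ∀ i ∈ Finset.univ, 0 < (2 * p i + 4 * q i) / 3 := fun i _ => by
    have := hp i; have := hq i; positivity
  have hw_sum : ∑ i, (2 * p i + 4 * q i) / 3 = 2 := by
    rw [← Finset.sum_div, Finset.sum_add_distrib, ← Finset.mul_sum, ← Finset.mul_sum, hp_sum,
      hq_sum]
    norm_num
  calc (∑ i, |q i - p i|) ^ 2 / 2
      ≤ ∑ i, |q i - p i| ^ 2 / ((2 * p i + 4 * q i) / 3) := by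
        simpa only [hw_sum] using Finset.sq_sum_div_le_sum_sq_div _ (fun i => |q i - p i|) hw
    _ = ∑ i, 3 * (p i - q i) ^ 2 / (2 * p i + 4 * q i) := by
        simp only [sq_abs, sub_sq_comm (q _), div_div_eq_mul_div, mul_comm]
    _ ≤ ∑ i, (p i * log (p i / q i) - p i + q i) :=
        Finset.sum_le_sum fun i _ => sq_div_le_mul_log_div (hp i) (hq i)
    _ = ∑ i, p i * log (p i / q i) := by
        rw [Finset.sum_add_distrib, Finset.sum_sub_distrib, hp_sum, hq_sum, sub_add_cancel]

end Pinsker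

lemma sum_mul_le_of_abs_le {ι R : Type*} [Ring R] [LinearOrder R] [IsStrictOrderedRing R]
    (s : Finset ι) (Q v : ι → R) {M : R} (hQ : ∀ i ∈ s, |Q i| ≤ M) :
    ∑ i ∈ s, Q i * v i ≤ M * ∑ i ∈ s, |v i| := by
  rw [Finset.mul_sum]
  refine Finset.sum_le_sum fun i hi => ?_
  calc Q i * v i ≤ |Q i| * |v i| := abs_mul (Q i) (v i) ▸ le_abs_self _
    _ ≤ M * |v i| := mul_le_mul_of_nonneg_right (hQ i hi) (abs_nonneg _)

lemma mul_sub_one_div_mul_sq_div_two_le {M t α : ℝ} (hα : 0 < α) :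
    M * t - 1 / α * (t ^ 2 / 2) ≤ α / 2 * M ^ 2 := by
  have : 0 ≤ (α * M - t) ^ 2 / (2 * α) := by positivity
  calc M * t - 1 / α * (t ^ 2 / 2) = α / 2 * M ^ 2 - (α * M - t) ^ 2 / (2 * α) := by
        field_simp; ring
    _ ≤ α / 2 * M ^ 2 := sub_le_self _ this

/-- One-step estimate (eq. (17)): for `Q ∈ ℝⁿ`, probability vectors `π, π'` on the
simplex (with `π` strictly positive so the KL divergence is finite), and `α > 0`,
`⟨Q, π − π'⟩ − (1/α)·KL(π' ‖ π) ≤ (α/2)·‖Q‖_∞²`. -/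
theorem stmt_4 {n : ℕ} (hn : 0 < n) (Q π π' : Fin n → ℝ) (α : ℝ) (hα : 0 < α)
    (hπ_pos : ∀ i, 0 < π i) (hπ_sum : ∑ i, π i = 1)
    (hπ'_nonneg : ∀ i, 0 ≤ π' i) (hπ'_sum : ∑ i, π' i = 1) :
    (∑ i, Q i * (π i - π' i)) -
      (1 / α) * (∑ i, π' i * Real.log (π' i / π i)) ≤
    (α / 2) * (Finset.univ.sup' (Finset.univ_nonempty_iff.mpr ⟨⟨0, hn⟩⟩)
      fun i => |Q i|) ^ 2 := by
  set M := Finset.univ.sup' (Finset.univ_nonempty_iff.mpr ⟨⟨0, hn⟩⟩) fun i => |Q i|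
  set t := ∑ i, |π i - π' i|
  have hQ : ∀ i ∈ Finset.univ, |Q i| ≤ M := fun i hi => Finset.le_sup' (fun j => |Q j|) hi
  have holder : ∑ i, Q i * (π i - π' i) ≤ M * t :=
    sum_mul_le_of_abs_le _ Q (fun i => π i - π' i) hQ
  have pinsker : t ^ 2 / 2 ≤ ∑ i, π' i * Real.log (π' i / π i) :=
    sq_sum_abs_sub_div_two_le_sum_mul_log_div hπ'_nonneg hπ_pos hπ'_sum hπ_sum
  calc _ ≤ M * t - 1 / α * (t ^ 2 / 2) := by gcongr
    _ ≤ α / 2 * M ^ 2 := mul_sub_one_div_mul_sq_div_two_le hα
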